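/- arXiv:2002.03698 — 2 statements merged into one kernel-verified Lean document; each statement's English description precedes it below -/
import Mathlib

section
/- Let α > 1 be a real constant, let j ≥ 1 be a real number, and let b > 0 be a real number. Set c0 := √(b·e^{α−1}·(e^{α−1} − 1/j)) and C_j := −log(c0)/(α−1). Then for every real r one has e^{(α−1)·(e^{-r²/j} + C_j)} ≤ (b + √(b² + 4·b·j²·c0²)) / (2·b·j·c0). -/
theorem exp_h_le_u2 (α j b : ℝ) (hα : 1 < α) (hj : 1 ≤ j) (hb : 0 < b)
    (c0 Cj : ℝ)
    (hc0 : c0 = Real.sqrt (b * Real.exp (α - 1) * (Real.exp (α - 1) - 1 / j)))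
    (hCj : Cj = -Real.log c0 / (α - 1)) :
    ∀ r : ℝ,
      Real.exp ((α - 1) * (Real.exp (-r ^ 2 / j) + Cj)) ≤
        (b + Real.sqrt (b ^ 2 + 4 * b * j ^ 2 * c0 ^ 2)) / (2 * b * j * c0) := by
  intro r
  set A := Real.exp (α - 1) with hA
  have hα1 : (0:ℝ) < α - 1 := by linarith
  have hA1 : 1 < A := by
    nlinarith [Real.add_one_le_exp (α - 1)]
  have hjpos : (0:ℝ) < j := by linarith
  have hinv : 1 / j ≤ 1 := by
    rw [div_le_one hjpos]; linarith
  have hAinv : 0 < A - 1 / j := by linarith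
  have harg : 0 < b * A * (A - 1 / j) := by positivity
  have hc0pos : 0 < c0 := by
    rw [hc0]; exact Real.sqrt_pos.mpr harg
  have hc0sq : c0 ^ 2 = b * A * (A - 1 / j) := by
    rw [hc0, Real.sq_sqrt harg.le]
  have hsq : b ^ 2 + 4 * b * j ^ 2 * c0 ^ 2 = (2 * b * j * A - b) ^ 2 := by
    rw [hc0sq]; field_simp; ring
  have hjA : 1 ≤ j * A := by nlinarith
  have h2bjA : 0 ≤ 2 * b * j * A - b := by nlinarith [mul_le_mul_of_nonneg_left hjA hb.le]
  have hsqrt : Real.sqrt (b ^ 2 + 4 * b * j ^ 2 * c0 ^ 2) = 2 * b * j * A - b := by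
    rw [hsq, Real.sqrt_sq h2bjA]
  have hRHS : (b + Real.sqrt (b ^ 2 + 4 * b * j ^ 2 * c0 ^ 2)) / (2 * b * j * c0)
      = A / c0 := by
    rw [hsqrt]
    field_simp
    ring
  rw [hRHS]
  have hCj' : (α - 1) * Cj = -Real.log c0 := by
    rw [hCj]; field_simp
  rw [mul_add, Real.exp_add, hCj', Real.exp_neg, Real.exp_log hc0pos]
  rw [div_eq_mul_inv]
  apply mul_le_mul_of_nonneg_right _ (by positivity)
  rw [hA]
  apply Real.exp_le_exp.mpr
  have hle : Real.exp (-r ^ 2 / j) ≤ 1 := by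
    rw [show (1:ℝ) = Real.exp 0 by simp]
    apply Real.exp_le_exp.mpr
    apply div_nonpos_of_nonpos_of_nonneg _ hjpos.le
    nlinarith [sq_nonneg r]
  calc (α - 1) * Real.exp (-r ^ 2 / j) ≤ (α - 1) * 1 :=
        mul_le_mul_of_nonneg_left hle hα1.le
    _ = α - 1 := mul_one _
end

section
/- Let n ≥ 1 be a natural number, z > 0 and α > 1 real constants, and let j ≥ 1 be a real number. Set b := n(z+1), c0 := √(b·e^{α−1}·(e^{α−1} − 1/j)) and C_j := −log(c0)/(α−1), and for r ∈ ℝ set h_j(r) := e^{-r²/j} + C_j. Then for every real r, ( e^{h_j(r)·(α−1)}·b − e^{-h_j(r)·(α−1)} ) / b ≤ 1/(j·c0). -/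
/-! With `A = e^{α-1}` and `E = e^{t(α-1)}`, where `t = e^{-r²/j} ∈ (0, 1]`, the choice of `C_j`
turns `e^{±h_j(r)(α-1)}` into `E / c0` and `c0 / E`. Since `c0² = b A (A - 1/j)`, the claim becomes
`(E - A)(E + A - 1/j) ≤ 0`, which holds because `1 ≤ E ≤ A` and `1/j ≤ 1`. -/

open Real

lemma div_sub_div_le_of_sq_eq {A E b c j : ℝ} (hb : 0 < b) (hc : 0 < c) (hE : 0 < E)
    (hj : 0 < j) (hc2 : c ^ 2 = b * A * (A - 1 / j)) (hEA : E ≤ A) (hsum : 1 ≤ j * (E + A)) :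
    (E / c * b - c / E) / b ≤ 1 / (j * c) := by
  have key : E ^ 2 * b - c ^ 2 ≤ b * E / j := by
    have hfactor : E ^ 2 * b - c ^ 2 - b * E / j = b * (E - A) * (E + A - 1 / j) := by
      rw [hc2]; ring
    have hsum' : 0 ≤ E + A - 1 / j := by
      rw [sub_nonneg, div_le_iff₀ hj]; linarith
    have : b * (E - A) * (E + A - 1 / j) ≤ 0 :=
      mul_nonpos_of_nonpos_of_nonneg (mul_nonpos_of_nonneg_of_nonpos hb.le (by linarith)) hsum'
    linarith
  calc (E / c * b - c / E) / b = (E ^ 2 * b - c ^ 2) / (b * c * E) := by field_simp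
    _ ≤ (b * E / j) / (b * c * E) := by gcongr
    _ = 1 / (j * c) := by field_simp

lemma exp_sub_log {c : ℝ} (hc : 0 < c) (x : ℝ) : exp (x - log c) = exp x / c := by
  rw [exp_sub, exp_log hc]

theorem lemma_three_ii (n : ℕ) (hn : 1 ≤ n) (z α j : ℝ) (hz : 0 < z) (hα : 1 < α)
    (hj : 1 ≤ j) (b c0 Cj : ℝ) (hb : b = n * (z + 1))
    (hc0 : c0 = Real.sqrt (b * Real.exp (α - 1) * (Real.exp (α - 1) - 1 / j)))
    (hCj : Cj = -Real.log c0 / (α - 1))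
    (h : ℝ → ℝ) (hh : ∀ r, h r = Real.exp (-r ^ 2 / j) + Cj) :
    ∀ r : ℝ,
      (Real.exp (h r * (α - 1)) * b - Real.exp (-(h r * (α - 1)))) / b ≤ 1 / (j * c0) := by
  intro r
  have hα' : 0 < α - 1 := by linarith
  have hj' : 0 < j := by linarith
  have hb' : 0 < b := by rw [hb]; positivity
  set A := exp (α - 1)
  have hA : 1 < A := one_lt_exp_iff.mpr hα'
  have hrad : 0 < b * A * (A - 1 / j) := by
    have : 1 / j ≤ 1 := (div_le_one hj').mpr hj
    exact mul_pos (mul_pos hb' (by linarith)) (by linarith)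
  have hc0sq : c0 ^ 2 = b * A * (A - 1 / j) := by rw [hc0, sq_sqrt hrad.le]
  have hc0' : 0 < c0 := by rw [hc0]; exact sqrt_pos.mpr hrad
  have hhr : h r * (α - 1) = exp (-r ^ 2 / j) * (α - 1) - log c0 := by
    rw [hh r, hCj]; field_simp; ring
  set t := exp (-r ^ 2 / j)
  have ht : t ≤ 1 :=
    exp_le_one_iff.mpr (div_nonpos_of_nonpos_of_nonneg (neg_nonpos.mpr (sq_nonneg r)) hj'.le)
  have hE : 1 ≤ exp (t * (α - 1)) := one_le_exp (mul_nonneg (exp_pos _).le hα'.le)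
  have hEA : exp (t * (α - 1)) ≤ A := exp_le_exp.mpr (mul_le_of_le_one_left hα'.le ht)
  rw [hhr, neg_sub, exp_sub_log hc0', exp_sub, exp_log hc0']
  exact div_sub_div_le_of_sq_eq hb' hc0' (exp_pos _) hj' hc0sq hEA (by nlinarith)
end
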